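/- The formula interpretation of the residuation rule is sound: if the formula Γ' ∨ □_a Δ' is valid in all Σ-frames (where Γ', Δ' interpret the nested sequents Γ, Δ), then □_{ā} Γ' ∨ Δ' is valid in all Σ-frames. -/

import Mathlib

/-- String converse: reverse the string and apply the letter converse. -/
def strConv {α : Type*} (bar : α → α) (u : List α) : List α :=
  (u.reverse).map bar

/-- String-indexed accessibility relation: `Rstr R u x y` iff there is an
`R`-path from `x` to `y` along the letters of `u`. -/
def Rstr {α W : Type*} (R : α → W → W → Prop) : List α → W → W → Prop
  | [], x, y => x = y
  | a :: u, x, y => ∃ z, R a x z ∧ Rstr R u z y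

/-- One-step rewriting of a semi-Thue system. -/
def Step {α : Type*} (S : Set (List α × List α)) (u v : List α) : Prop :=
  ∃ x y p q, (p, q) ∈ S ∧ u = x ++ p ++ y ∧ v = x ++ q ++ y

/-- The rewrite relation `⇒_S`: reflexive-transitive closure of one-step rewriting. -/
def Rw {α : Type*} (S : Set (List α × List α)) : List α → List α → Prop :=
  Relation.ReflTransGen (Step S)

/-- The language generated from the letter `a` by the semi-Thue system `S`. -/
def Lang {α : Type*} (S : Set (List α × List α)) (a : α) : Set (List α) :=
  {u | Rw S [a] u}

/-- Modal formulas in negation normal form over alphabet `α`. -/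
inductive Fm (α : Type*) : Type _
  | atom : ℕ → Fm α
  | natom : ℕ → Fm α
  | and : Fm α → Fm α → Fm α
  | or : Fm α → Fm α → Fm α
  | box : α → Fm α → Fm α
  | dia : α → Fm α → Fm α

/-- Kripke satisfaction. -/
def Sat {α W : Type*} (R : α → W → W → Prop) (V : ℕ → W → Prop) : W → Fm α → Prop
  | x, .atom p => V p x
  | x, .natom p => ¬ V p x
  | x, .and A B => Sat R V x A ∧ Sat R V x B
  | x, .or A B => Sat R V x A ∨ Sat R V x B
  | x, .box a A => ∀ y, R a x y → Sat R V y A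
  | x, .dia a A => ∃ y, R a x y ∧ Sat R V y A

/-- Iterated box along a string. -/
def boxs {α : Type*} (u : List α) (A : Fm α) : Fm α := u.foldr Fm.box A

/-- Iterated diamond along a string. -/
def dias {α : Type*} (u : List α) (A : Fm α) : Fm α := u.foldr Fm.dia A

theorem sat_or_box_of_forall_sat_or_box {α W : Type*} {R : α → W → W → Prop}
    {V : ℕ → W → Prop} {a a' : α} {G D : Fm α} (hconv : ∀ x y, R a' x y → R a y x)
    (h : ∀ x, Sat R V x (.or G (.box a D))) (x : W) :
    Sat R V x (.or (.box a' G) D) :=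
  or_iff_not_imp_right.2 fun hD y hxy =>
    (h y).resolve_right fun hbox => hD (hbox x (hconv x y hxy))

theorem stmt12 {α : Type*} (bar : α → α) (a : α) (G D : Fm α)
    (h : ∀ (W : Type) (R : α → W → W → Prop),
        (∀ b x y, R b x y ↔ R (bar b) y x) →
        ∀ (V : ℕ → W → Prop) (x : W), Sat R V x (.or G (.box a D))) :
    ∀ (W : Type) (R : α → W → W → Prop),
        (∀ b x y, R b x y ↔ R (bar b) y x) →
        ∀ (V : ℕ → W → Prop) (x : W), Sat R V x (.or (.box (bar a) G) D) := by
  intro W R hS V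
  exact sat_or_box_of_forall_sat_or_box (fun x y => (hS a y x).2) (h W R hS V)
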